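/- arXiv:math/0411337 — 2 statements merged into one kernel-verified Lean document; each statement's English description precedes it below -/
import Mathlib

section
/- Let B → A be a surjection of commutative rings with kernel J satisfying J² = 0 and J generated by a single element t. Let N be a B-module such that N/JN is flat over A and such that for every n ∈ N with tn = 0, n lies in (ker(B → A))·N. Then the natural map J ⊗_B N → JN is an isomorphism, hence (by the local criterion of flatness, when B is Noetherian local and N finitely generated) N is flat over B. -/
open TensorProduct

/-! Since `J = (t)`, every element of `J ⊗ N` is a pure tensor `t ⊗ n`, which maps to `t • n`.
If `t • n = 0` then `n ∈ J • N`, and `t ⊗ j • m = (j * t) ⊗ m = 0` for `j ∈ J` because `J² = 0`;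
so the multiplication map is injective. Its range is `J • N` for every ideal. -/

namespace TensorProduct

variable {R M N : Type*} [CommSemiring R] [AddCommMonoid M] [Module R M]
  [AddCommMonoid N] [Module R N]

theorem mk_surjective_of_span_singleton_eq_top {m : M} (hm : Submodule.span R {m} = ⊤) :
    Function.Surjective (mk R M N m) := by
  intro x
  induction x using TensorProduct.induction_on with
  | zero => exact ⟨0, tmul_zero N m⟩
  | tmul x n =>
    obtain ⟨r, rfl⟩ := (Submodule.span_singleton_eq_top_iff R m).mp hm x
    exact ⟨r • n, (smul_tmul r m n).symm⟩
  | add x y hx hy =>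
    obtain ⟨n₁, rfl⟩ := hx
    obtain ⟨n₂, rfl⟩ := hy
    exact ⟨n₁ + n₂, map_add _ n₁ n₂⟩

theorem tmul_eq_zero_of_mem_smul_top {I : Ideal R} {m : M} (hm : ∀ i ∈ I, i • m = 0) {n : N}
    (hn : n ∈ I • (⊤ : Submodule R N)) : m ⊗ₜ[R] n = 0 := by
  refine Submodule.smul_induction_on hn (fun i hi n _ ↦ ?_) fun x y hx hy ↦ ?_
  · rw [← smul_tmul, hm i hi, zero_tmul]
  · rw [tmul_add, hx, hy, add_zero]

theorem range_lift_lsmul_comp_subtype (I : Ideal R) :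
    LinearMap.range (lift ((LinearMap.lsmul R N).comp I.subtype)) = I • ⊤ := by
  apply le_antisymm
  · rintro _ ⟨x, rfl⟩
    induction x using TensorProduct.induction_on with
    | zero => simp
    | tmul i n => exact Submodule.smul_mem_smul i.2 trivial
    | add x y hx hy => rw [map_add]; exact add_mem hx hy
  · rw [Submodule.smul_le]
    exact fun i hi n _ ↦ ⟨⟨i, hi⟩ ⊗ₜ n, rfl⟩

end TensorProduct

theorem Ideal.span_singleton_generator_eq_top {R : Type*} [CommSemiring R] (t : R) :
    Submodule.span R {(⟨t, Ideal.mem_span_singleton_self t⟩ : Ideal.span {t})} = ⊤ := by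
  refine (Submodule.span_singleton_eq_top_iff R _).mpr fun ⟨x, hx⟩ ↦ ?_
  obtain ⟨r, rfl⟩ := Ideal.mem_span_singleton'.mp hx
  exact ⟨r, rfl⟩

theorem mul_map_bijective_of_torsion_in_JN_general
    (B N : Type*) [CommRing B] [AddCommGroup N] [Module B N]
    (t : B) (J : Ideal B) (hJt : J = Ideal.span {t}) (hJ2 : J ^ 2 = ⊥)
    (htor : ∀ n : N, t • n = 0 → n ∈ (J • ⊤ : Submodule B N)) :
    Function.Injective ⇑(TensorProduct.lift ((LinearMap.lsmul B N).comp J.subtype) :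
      J ⊗[B] N →ₗ[B] N) ∧
    LinearMap.range (TensorProduct.lift ((LinearMap.lsmul B N).comp J.subtype) :
      J ⊗[B] N →ₗ[B] N) = J • (⊤ : Submodule B N) := by
  subst hJt
  refine ⟨(injective_iff_map_eq_zero _).mpr fun x hx ↦ ?_, range_lift_lsmul_comp_subtype _⟩
  obtain ⟨n, rfl⟩ := mk_surjective_of_span_singleton_eq_top
    (Ideal.span_singleton_generator_eq_top t) x
  have hkill : ∀ j ∈ Ideal.span {t}, j * t = 0 := fun j hj ↦ by
    rw [← Ideal.mem_bot, ← hJ2, pow_two]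
    exact Ideal.mul_mem_mul hj (Ideal.mem_span_singleton_self t)
  exact tmul_eq_zero_of_mem_smul_top (fun j hj ↦ Subtype.ext (hkill j hj)) (htor n hx)

/-- **Local criterion step in Schlessinger's gluing lemma.** Let `B → A` be a surjection of
commutative rings, realized as `A = B/J`, whose kernel `J` satisfies `J² = 0` and is
generated by a single element `t`. Let `N` be a `B`-module such that `N/JN`
(equivalently, the base change `(B/J) ⊗_B N`) is flat over `A = B/J`, and such that every
`n ∈ N` with `t·n = 0` lies in `J·N`. Then the natural multiplication map `J ⊗_B N → JN`
is an isomorphism: it is injective with image the submodule `JN`. (By the local criterion of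
flatness, when `B` is Noetherian local and `N` finitely generated, `N` is then flat over
`B`.) -/
theorem mul_map_bijective_of_torsion_in_JN
    (B N : Type*) [CommRing B] [AddCommGroup N] [Module B N]
    (t : B) (J : Ideal B) (hJt : J = Ideal.span {t}) (hJ2 : J ^ 2 = ⊥)
    (hflat : Module.Flat (B ⧸ J) ((B ⧸ J) ⊗[B] N))
    (htor : ∀ n : N, t • n = 0 → n ∈ (J • ⊤ : Submodule B N)) :
    Function.Injective ⇑(TensorProduct.lift ((LinearMap.lsmul B N).comp J.subtype) :
      J ⊗[B] N →ₗ[B] N) ∧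
    LinearMap.range (TensorProduct.lift ((LinearMap.lsmul B N).comp J.subtype) :
      J ⊗[B] N →ₗ[B] N) = J • (⊤ : Submodule B N) :=
  mul_map_bijective_of_torsion_in_JN_general B N t J hJt hJ2 htor
end

section
/- Let A → B and C → B be surjective homomorphisms of groups, and let D = A ×_B C. Then the groupoid of D-torsors is equivalent to the groupoid of triples (F_A, F_C, ψ) where F_A is an A-torsor, F_C is a C-torsor, and ψ is an isomorphism of B-torsors between the pushforwards F_A ×^A B and F_C ×^C B. Concretely, given such a triple, the fiber product F_A ×_{F_A ×^A B} F_C (formed via ψ) is a D-torsor, and this construction is inverse to pushing forward a D-torsor along the two projections. -/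
/-- **Torsors over a fiber product of groups (abstract gluing lemma).** Let `φ : A → B` and
`ψ : C → B` be surjective group homomorphisms, and let `D = A ×_B C` be the fiber product
(realized as pairs `(a, c)` with `φ a = ψ c`). Given an `A`-torsor `F_A`, a `C`-torsor `F_C`,
a `B`-torsor `F_B`, and equivariant maps `p_A : F_A → F_B`, `p_C : F_C → F_B` (which exhibit
`F_B` as the pushforwards `F_A ×^A B ≅ F_B ≅ F_C ×^C B`, via the isomorphism `ψ`), the fiber
product `F_A ×_{F_B} F_C` is a `D`-torsor: it is nonempty, and `D` acts freely and
transitively on it. This is the concrete content of the equivalence between `D`-torsors and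
triples `(F_A, F_C, ψ)`. -/
theorem fiberProduct_torsor
    (A B C : Type*) [Group A] [Group B] [Group C]
    (φ : A →* B) (ψ : C →* B)
    (hφ : Function.Surjective φ) (hψ : Function.Surjective ψ)
    (FA FB FC : Type*) [MulAction A FA] [MulAction B FB] [MulAction C FC]
    (hFA₀ : Nonempty FA) (hFB₀ : Nonempty FB) (hFC₀ : Nonempty FC)
    (hFA : ∀ x y : FA, ∃! a : A, a • x = y)
    (hFB : ∀ x y : FB, ∃! b : B, b • x = y)
    (hFC : ∀ x y : FC, ∃! c : C, c • x = y)
    (pA : FA → FB) (pC : FC → FB)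
    (hpA : ∀ (a : A) (x : FA), pA (a • x) = φ a • pA x)
    (hpC : ∀ (c : C) (x : FC), pC (c • x) = ψ c • pC x) :
    (∃ (x : FA) (y : FC), pA x = pC y) ∧
    (∀ x y : FA × FC, pA x.1 = pC x.2 → pA y.1 = pC y.2 →
      ∃! d : A × C, φ d.1 = ψ d.2 ∧ d.1 • x.1 = y.1 ∧ d.2 • x.2 = y.2) := by
  constructor
  · obtain ⟨x⟩ := hFA₀
    obtain ⟨y⟩ := hFC₀
    obtain ⟨b, hb, -⟩ := hFB (pA x) (pC y)
    obtain ⟨a, rfl⟩ := hφ b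
    exact ⟨a • x, y, by rw [hpA, hb]⟩
  · rintro ⟨x1, x2⟩ ⟨y1, y2⟩ hx hy
    obtain ⟨a, ha, ha'⟩ := hFA x1 y1
    obtain ⟨c, hc, hc'⟩ := hFC x2 y2
    refine ⟨(a, c), ⟨?_, ha, hc⟩, ?_⟩
    · have h1 : φ a • pA x1 = ψ c • pA x1 := by
        rw [← hpA, ha, hx, hy, ← hpC, hc]
      obtain ⟨b, -, hb'⟩ := hFB (pA x1) (φ a • pA x1)
      exact (hb' _ rfl).trans (hb' _ h1.symm).symm
    · rintro ⟨a', c'⟩ ⟨-, h1, h2⟩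
      exact Prod.ext (ha' a' h1) (hc' c' h2)
end
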